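/- arXiv:2408.10384 — 2 statements merged into one kernel-verified Lean document; each statement's English description precedes it below -/
import Mathlib

section
/- Let U be a Hilbert space, 𝒰 a Banach space with a bilinear pairing satisfying |⟨v,u⟩_U| ≤ ‖v‖_{𝒰*} ‖u‖_𝒰, and suppose G = F + ψ where F : U → ℝ is convex and differentiable, ψ proper closed convex, and u* satisfies the growth condition ⟨∇F(u*), u - u*⟩ + ψ(u) - ψ(u*) ≥ θ ‖u - u*‖_𝒰^ρ for all u ∈ U, with θ > 0, ρ ≥ 2. If u_N minimizes F_N + ψ where F_N is convex differentiable, then θ ‖u_N - u*‖_𝒰^{ρ-1} ≤ ‖∇F(u*) - ∇F_N(u*)‖_{𝒰*}. -/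
open scoped RealInnerProductSpace

/-!
Comparing `u_N` with `u*` in the optimality of `u_N`, and bounding `F_N` below by its tangent
at `u*` (convexity), controls `ψ u_N - ψ u*` by `-⟪∇F_N(u*), u_N - u*⟫`. Inserted into the growth
condition this gives `θ ‖u_N - u*‖^ρ ≤ ⟪∇F(u*) - ∇F_N(u*), u_N - u*⟫`, and the pairing inequality
followed by division by `‖u_N - u*‖` yields the estimate.
-/

theorem ConvexOn.apply_sub_le_of_hasFDerivAt {E : Type*} [NormedAddCommGroup E] [NormedSpace ℝ E]
    {s : Set E} {f : E → ℝ} {f' : E →L[ℝ] ℝ} {x y : E} (hf : ConvexOn ℝ s f) (hx : x ∈ s)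
    (hy : y ∈ s) (hd : HasFDerivAt f f' x) :
    f' (y - x) ≤ f y - f x := by
  have hline : ConvexOn ℝ (AffineMap.lineMap (k := ℝ) x y ⁻¹' s)
      (f ∘ AffineMap.lineMap (k := ℝ) x y) :=
    hf.comp_affineMap _
  have hderiv : HasDerivAt (f ∘ AffineMap.lineMap (k := ℝ) x y) (f' (y - x)) 0 := by
    refine HasFDerivAt.comp_hasDerivAt (0 : ℝ) ?_ AffineMap.hasDerivAt_lineMap
    simpa using hd
  simpa [slope] using
    hline.le_slope_of_hasDerivAt (by simpa) (by simpa) zero_lt_one hderiv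

theorem ConvexOn.inner_sub_le_of_hasGradientAt {U : Type*} [NormedAddCommGroup U]
    [InnerProductSpace ℝ U] [CompleteSpace U] {s : Set U} {f : U → ℝ} {g x y : U}
    (hf : ConvexOn ℝ s f) (hx : x ∈ s) (hy : y ∈ s) (hg : HasGradientAt f g x) :
    ⟪g, y - x⟫ ≤ f y - f x := by
  simpa using hf.apply_sub_le_of_hasFDerivAt hx hy hg.hasFDerivAt

theorem Real.mul_rpow_sub_one_le_of_mul_rpow_le {a c θ ρ : ℝ} (ha : 0 ≤ a) (hc : 0 ≤ c)
    (hρ : ρ ≠ 1) (h : θ * a ^ ρ ≤ c * a) :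
    θ * a ^ (ρ - 1) ≤ c := by
  rcases ha.eq_or_lt with rfl | ha
  · simpa [Real.zero_rpow (sub_ne_zero.mpr hρ)] using hc
  · rw [← sub_add_cancel ρ 1, Real.rpow_add_one ha.ne', ← mul_assoc] at h
    exact le_of_mul_le_mul_right h ha

theorem stmt3_general
    {U : Type*} [NormedAddCommGroup U] [InnerProductSpace ℝ U] [CompleteSpace U]
    (S : Set U) (ψ : U → ℝ)
    -- the 𝒰-norm and 𝒰*-norm on U with the Hölder-type pairing inequality:
    (nU nStar : U → ℝ)
    (hnU : ∀ x, 0 ≤ nU x) (hnStar : ∀ x, 0 ≤ nStar x)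
    (hpair : ∀ v u : U, |⟪v, u⟫| ≤ nStar v * nU u)
    -- F, F_N convex and differentiable:
    (FN : U → ℝ) (gradF gradFN : U → U)
    (hFNconv : ConvexOn ℝ Set.univ FN)
    (hFN : ∀ x, HasGradientAt FN (gradFN x) x)
    (θ ρ : ℝ) (hρ : 2 ≤ ρ)
    (ustar : U) (hustar : ustar ∈ S)
    -- growth condition at u*:
    (hgrowth : ∀ u : U, ⟪gradF ustar, u - ustar⟫ + ψ u - ψ ustar ≥ θ * nU (u - ustar) ^ ρ)
    (uN : U)
    -- u_N minimizes F_N + ψ: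
    (hminN : ∀ u ∈ S, FN uN + ψ uN ≤ FN u + ψ u) :
    θ * nU (uN - ustar) ^ (ρ - 1) ≤ nStar (gradF ustar - gradFN ustar) := by
  have hFN_lower : ⟪gradFN ustar, uN - ustar⟫ ≤ FN uN - FN ustar :=
    hFNconv.inner_sub_le_of_hasGradientAt (Set.mem_univ _) (Set.mem_univ _) (hFN ustar)
  have hgap : θ * nU (uN - ustar) ^ ρ ≤ ⟪gradF ustar - gradFN ustar, uN - ustar⟫ := by
    rw [inner_sub_left]
    linarith [hgrowth uN, hminN ustar hustar]
  refine Real.mul_rpow_sub_one_le_of_mul_rpow_le (hnU _) (hnStar _) (by linarith) ?_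
  exact hgap.trans ((le_abs_self _).trans (hpair _ _))

/-- under the growth condition with exponent `ρ ≥ 2` at the minimizer `u*`
of `F + ψ`, any minimizer `u_N` of `F_N + ψ` satisfies
`θ ‖u_N - u*‖_𝒰^{ρ-1} ≤ ‖∇F(u*) - ∇F_N(u*)‖_{𝒰*}`.
The `𝒰`-norm `nU` and the `𝒰*`-norm `nStar` are encoded as nonnegative functions on `U`
satisfying the Hölder-type pairing inequality. -/
theorem stmt3
    {U : Type*} [NormedAddCommGroup U] [InnerProductSpace ℝ U] [CompleteSpace U]
    (S : Set U) (ψ : U → ℝ)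
    (hS_ne : S.Nonempty) (hS_closed : IsClosed S) (hS_convex : Convex ℝ S)
    (hψ_convex : ConvexOn ℝ S ψ) (hψ_lsc : LowerSemicontinuousOn ψ S)
    -- the 𝒰-norm and 𝒰*-norm on U with the Hölder-type pairing inequality:
    (nU nStar : U → ℝ)
    (hnU : ∀ x, 0 ≤ nU x) (hnStar : ∀ x, 0 ≤ nStar x)
    (hpair : ∀ v u : U, |⟪v, u⟫| ≤ nStar v * nU u)
    -- F, F_N convex and differentiable:
    (F FN : U → ℝ) (gradF gradFN : U → U)
    (hFconv : ConvexOn ℝ Set.univ F) (hFNconv : ConvexOn ℝ Set.univ FN)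
    (hF : ∀ x, HasGradientAt F (gradF x) x)
    (hFN : ∀ x, HasGradientAt FN (gradFN x) x)
    (θ ρ : ℝ) (hθ : 0 < θ) (hρ : 2 ≤ ρ)
    (ustar : U) (hustar : ustar ∈ S)
    -- u* minimizes F + ψ:
    (hmin : ∀ u ∈ S, F ustar + ψ ustar ≤ F u + ψ u)
    -- growth condition at u*:
    (hgrowth : ∀ u : U, ⟪gradF ustar, u - ustar⟫ + ψ u - ψ ustar ≥ θ * nU (u - ustar) ^ ρ)
    (uN : U) (huN : uN ∈ S)
    -- u_N minimizes F_N + ψ: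
    (hminN : ∀ u ∈ S, FN uN + ψ uN ≤ FN u + ψ u) :
    θ * nU (uN - ustar) ^ (ρ - 1) ≤ nStar (gradF ustar - gradFN ustar) :=
  stmt3_general S ψ nU nStar hnU hnStar hpair FN gradF gradFN hFNconv hFN θ ρ hρ ustar hustar
    hgrowth uN hminN
end

section
/- Let U, 𝒰, 𝒰*, ℋ satisfy the Hölder-type setting: |⟨v,u⟩_U| ≤ ‖v‖_{𝒰*}‖u‖_𝒰 for v ∈ 𝒰*, u ∈ U, and ℋ ↪ 𝒰* with embedding constant C. Suppose F, F_N are convex continuously differentiable on U with the growth condition ⟨∇F(u*), u - u*⟩ + ψ(u) - ψ(u*) ≥ θ‖u - u*‖²_𝒰 for all u ∈ U at the minimizer u* of F + ψ, and u_N minimizes F_N + ψ. If ∇F(u*) - ∇F_N(u*) ∈ ℋ, then θ‖u_N - u*‖_𝒰 ≤ C ‖∇F(u*) - ∇F_N(u*)‖_ℋ. -/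
open scoped RealInnerProductSpace

/-
Testing the first-order convexity inequality of `F_N` at `u*` against `u_N`, and the minimality
of `u_N` against `u*`, shows that the perturbation `∇F(u*) - ∇F_N(u*)` pairs with `u_N - u*` to
at least the growth term `θ‖u_N - u*‖²_𝒰`. The Hölder pairing and the embedding bound that pairing
by `C‖∇F(u*) - ∇F_N(u*)‖_ℋ ‖u_N - u*‖_𝒰`, and one factor `‖u_N - u*‖_𝒰` cancels.
-/

theorem ConvexOn.le_sub_of_hasFDerivAt {E : Type*} [NormedAddCommGroup E] [NormedSpace ℝ E]
    {s : Set E} {f : E → ℝ} {f' : E →L[ℝ] ℝ} {x y : E} (hf : ConvexOn ℝ s f) (hx : x ∈ s)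
    (hy : y ∈ s) (hf' : HasFDerivAt f f' x) : f' (y - x) ≤ f y - f x := by
  have hline : ConvexOn ℝ (AffineMap.lineMap x y ⁻¹' s) (f ∘ AffineMap.lineMap x y) :=
    hf.comp_affineMap _
  have hderiv : HasDerivAt (f ∘ AffineMap.lineMap (k := ℝ) x y) (f' (y - x)) 0 :=
    (AffineMap.lineMap_apply_zero (k := ℝ) x y ▸ hf').comp_hasDerivAt 0 AffineMap.hasDerivAt_lineMap
  simpa [slope_def_field] using
    hline.le_slope_of_hasDerivAt (by simpa) (by simpa) zero_lt_one hderiv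

theorem ConvexOn.inner_le_sub_of_hasGradientAt {E : Type*} [NormedAddCommGroup E]
    [InnerProductSpace ℝ E] [CompleteSpace E] {s : Set E} {f : E → ℝ} {g x y : E}
    (hf : ConvexOn ℝ s f) (hx : x ∈ s) (hy : y ∈ s) (hg : HasGradientAt f g x) :
    ⟪g, y - x⟫ ≤ f y - f x :=
  hf.le_sub_of_hasFDerivAt hx hy hg

theorem mul_le_of_mul_sq_le_mul {α : Type*} [Semiring α] [LinearOrder α] [IsStrictOrderedRing α]
    {θ a b : α} (ha : 0 ≤ a) (hb : 0 ≤ b) (h : θ * a ^ 2 ≤ b * a) : θ * a ≤ b := by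
  rcases ha.eq_or_lt with rfl | ha
  · simpa using hb
  · exact le_of_mul_le_mul_right (by rwa [mul_assoc, ← sq]) ha

theorem stmt13_general
    {U : Type*} [NormedAddCommGroup U] [InnerProductSpace ℝ U] [CompleteSpace U]
    (S : Set U) (ψ : U → ℝ)
    (nU nStar nH : U → ℝ) (Hset : Set U)
    (hnU : ∀ x, 0 ≤ nU x) (hnStar : ∀ x, 0 ≤ nStar x)
    -- Hölder-type pairing inequality:
    (hpair : ∀ v u : U, |⟪v, u⟫| ≤ nStar v * nU u)
    -- embedding ℋ ↪ 𝒰* with constant C: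
    (C : ℝ) (hembed : ∀ v ∈ Hset, nStar v ≤ C * nH v)
    (FN : U → ℝ) (gradF gradFN : U → U)
    (hFNconv : ConvexOn ℝ Set.univ FN)
    (hFN : ∀ x, HasGradientAt FN (gradFN x) x)
    (θ : ℝ)
    (ustar : U) (hustar : ustar ∈ S)
    -- quadratic growth condition at u*:
    (hgrowth : ∀ u : U, ⟪gradF ustar, u - ustar⟫ + ψ u - ψ ustar ≥ θ * nU (u - ustar) ^ 2)
    (uN : U)
    (hminN : ∀ u ∈ S, FN uN + ψ uN ≤ FN u + ψ u)
    -- ∇F(u*) - ∇F_N(u*) ∈ ℋ: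
    (hmem : gradF ustar - gradFN ustar ∈ Hset) :
    θ * nU (uN - ustar) ≤ C * nH (gradF ustar - gradFN ustar) := by
  set d := uN - ustar
  set w := gradF ustar - gradFN ustar
  have hFN_lower : ⟪gradFN ustar, d⟫ ≤ FN uN - FN ustar :=
    hFNconv.inner_le_sub_of_hasGradientAt trivial trivial (hFN ustar)
  have hgrowth_le : θ * nU d ^ 2 ≤ ⟪w, d⟫ := by
    have := hgrowth uN
    have := hminN ustar hustar
    rw [inner_sub_left]
    linarith
  have hpair_le : ⟪w, d⟫ ≤ C * nH w * nU d :=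
    calc ⟪w, d⟫ ≤ |⟪w, d⟫| := le_abs_self _
      _ ≤ nStar w * nU d := hpair w d
      _ ≤ C * nH w * nU d := mul_le_mul_of_nonneg_right (hembed w hmem) (hnU d)
  exact mul_le_of_mul_sq_le_mul (hnU d) ((hnStar w).trans (hembed w hmem))
    (hgrowth_le.trans hpair_le)

/-- with the Hölder-type pairing, the quadratic growth condition at the
minimizer `u*` of `F + ψ`, and the embedding `ℋ ↪ 𝒰*` with constant `C`, any minimizer
`u_N` of `F_N + ψ` satisfies `θ‖u_N - u*‖_𝒰 ≤ C‖∇F(u*) - ∇F_N(u*)‖_ℋ` provided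
`∇F(u*) - ∇F_N(u*) ∈ ℋ`. The 𝒰-norm `nU`, 𝒰*-norm `nStar`, and ℋ-norm `nH` are encoded
as nonnegative functions on `U`, `Hset ⊆ U` being the image of `ℋ`. -/
theorem stmt13
    {U : Type*} [NormedAddCommGroup U] [InnerProductSpace ℝ U] [CompleteSpace U]
    (S : Set U) (ψ : U → ℝ)
    (hS_ne : S.Nonempty) (hS_closed : IsClosed S) (hS_convex : Convex ℝ S)
    (hψ_convex : ConvexOn ℝ S ψ) (hψ_lsc : LowerSemicontinuousOn ψ S)
    (nU nStar nH : U → ℝ) (Hset : Set U)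
    (hnU : ∀ x, 0 ≤ nU x) (hnStar : ∀ x, 0 ≤ nStar x) (hnH : ∀ x, 0 ≤ nH x)
    -- Hölder-type pairing inequality:
    (hpair : ∀ v u : U, |⟪v, u⟫| ≤ nStar v * nU u)
    -- embedding ℋ ↪ 𝒰* with constant C:
    (C : ℝ) (hC : 0 < C) (hembed : ∀ v ∈ Hset, nStar v ≤ C * nH v)
    (F FN : U → ℝ) (gradF gradFN : U → U)
    (hFconv : ConvexOn ℝ Set.univ F) (hFNconv : ConvexOn ℝ Set.univ FN)
    (hF : ∀ x, HasGradientAt F (gradF x) x)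
    (hFN : ∀ x, HasGradientAt FN (gradFN x) x)
    (θ : ℝ) (hθ : 0 < θ)
    (ustar : U) (hustar : ustar ∈ S)
    (hmin : ∀ u ∈ S, F ustar + ψ ustar ≤ F u + ψ u)
    -- quadratic growth condition at u*:
    (hgrowth : ∀ u : U, ⟪gradF ustar, u - ustar⟫ + ψ u - ψ ustar ≥ θ * nU (u - ustar) ^ 2)
    (uN : U) (huN : uN ∈ S)
    (hminN : ∀ u ∈ S, FN uN + ψ uN ≤ FN u + ψ u)
    -- ∇F(u*) - ∇F_N(u*) ∈ ℋ:
    (hmem : gradF ustar - gradFN ustar ∈ Hset) :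
    θ * nU (uN - ustar) ≤ C * nH (gradF ustar - gradFN ustar) :=
  stmt13_general S ψ nU nStar nH Hset hnU hnStar hpair C hembed FN gradF gradFN hFNconv hFN θ ustar
    hustar hgrowth uN hminN hmem
end
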